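/- arXiv:1506.02190 — 2 statements merged into one kernel-verified Lean document; each statement's English description precedes it below -/
import Mathlib

section
/- Let k ≥ 2, let y : Fin k → ℝ be binary relevance values of a ranked list (position 1 is the top), let K̃ > 0 be a real constant, and define AP@k(y) = (∑_{p=1}^{k} y(p)·((1/p)∑_{q=1}^{p} y(q)))/K̃. Let 1 ≤ p < k and let y' be obtained from y by swapping the entries at positions p and p+1. Then AP@k(y') − AP@k(y) = (y(p+1) − y(p))·(1 + ∑_{q=1}^{p-1} y(q))·(1/p − 1/(p+1))/K̃. (Equation (map-change): the change in average precision when the item at position p+1 is moved up one position.) -/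
/-!
Swapping two adjacent entries `p ⋖ p'` leaves every prefix sum unchanged except the one
ending at `p`, which trades `y p` for `y p'`; so only the terms at `p` and `p'` of the AP sum
move, and their change factors as `(y p' - y p) (y p + y p' + A) (1/(p+1) - 1/(p+2))`, with `A`
the sum of the entries before `p`. For binary relevances `(y p' - y p) (y p + y p') = y p' - y p`.
-/

open Finset

section AdjacentSwap

variable {ι R : Type*} [LinearOrder ι] [CommRing R] {p p' : ι}

theorem swap_le_iff_of_covBy (hp : p ⋖ p') {q : ι} (hq : q ≠ p) (r : ι) :
    Equiv.swap p p' r ≤ q ↔ r ≤ q := by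
  have hpq : p ≤ q ↔ p' ≤ q :=
    ⟨fun h => hp.ge_of_gt (h.lt_of_ne hq.symm), fun h => hp.le.trans h⟩
  rcases eq_or_ne r p with rfl | hrp
  · rw [Equiv.swap_apply_left, hpq]
  rcases eq_or_ne r p' with rfl | hrp'
  · rw [Equiv.swap_apply_right, hpq]
  · rw [Equiv.swap_apply_of_ne_of_ne hrp hrp']

variable [LocallyFiniteOrderBot ι]

theorem sum_Iic_comp_swap_of_ne (hp : p ⋖ p') (z : ι → R) {q : ι} (hq : q ≠ p) :
    ∑ r ∈ Iic q, z (Equiv.swap p p' r) = ∑ r ∈ Iic q, z r :=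
  sum_equiv (Equiv.swap p p') (fun r => by simp only [mem_Iic, swap_le_iff_of_covBy hp hq])
    fun _ _ => rfl

theorem sum_Iic_comp_swap_left (hp : p ⋖ p') (z : ι → R) :
    ∑ r ∈ Iic p, z (Equiv.swap p p' r) = z p' + ∑ r ∈ Iio p, z r := by
  rw [← add_sum_Iio_eq_sum_Iic, Equiv.swap_apply_left]
  refine congrArg _ (sum_congr rfl fun r hr => ?_)
  have hr : r < p := mem_Iio.1 hr
  rw [Equiv.swap_apply_of_ne_of_ne hr.ne (hr.trans hp.lt).ne]

theorem sum_Iic_of_covBy (hp : p ⋖ p') (z : ι → R) :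
    ∑ r ∈ Iic p', z r = z p' + (z p + ∑ r ∈ Iio p, z r) := by
  have hIio : Iio p' = Iic p := coe_injective (by push_cast; exact hp.Iio_eq)
  rw [← add_sum_Iio_eq_sum_Iic, hIio, ← add_sum_Iio_eq_sum_Iic]

theorem sum_mul_sum_Iic_comp_swap_sub [Fintype ι] (hp : p ⋖ p') (w z : ι → R) :
    ∑ q, (z ∘ Equiv.swap p p') q * (w q * ∑ r ∈ Iic q, (z ∘ Equiv.swap p p') r) -
        ∑ q, z q * (w q * ∑ r ∈ Iic q, z r) =
      (z p' - z p) * (z p + z p' + ∑ r ∈ Iio p, z r) * (w p - w p') := by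
  rw [← sum_sub_distrib, sum_eq_add_of_mem p p' (mem_univ _) (mem_univ _) hp.lt.ne]
  · simp only [Function.comp_apply, Equiv.swap_apply_left, Equiv.swap_apply_right]
    rw [sum_Iic_comp_swap_left hp, sum_Iic_comp_swap_of_ne hp z hp.lt.ne', sum_Iic_of_covBy hp,
      ← add_sum_Iio_eq_sum_Iic]
    ring
  · rintro q - ⟨hqp, hqp'⟩
    simp only [Function.comp_apply, Equiv.swap_apply_of_ne_of_ne hqp hqp',
      sum_Iic_comp_swap_of_ne hp z hqp, sub_self]

end AdjacentSwap

theorem ap_swap_change_general (k : ℕ) (y : Fin k → ℝ)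
    (hy : ∀ p, y p = 0 ∨ y p = 1) (Kt : ℝ)
    (p : Fin k) (hp : (p : ℕ) + 1 < k) :
    let AP : (Fin k → ℝ) → ℝ := fun z =>
      (∑ q : Fin k, z q * ((1 / ((q : ℕ) + 1 : ℝ)) *
        ∑ r ∈ Finset.univ.filter (fun r => r ≤ q), z r)) / Kt
    let p' : Fin k := ⟨(p : ℕ) + 1, hp⟩
    let y' : Fin k → ℝ := y ∘ Equiv.swap p p'
    AP y' - AP y =
      (y p' - y p) * (1 + ∑ q ∈ Finset.univ.filter (fun q => q < p), y q) *
        (1 / ((p : ℕ) + 1 : ℝ) - 1 / ((p : ℕ) + 2 : ℝ)) / Kt := by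
  intro AP p' y'
  have hcov : p ⋖ p' := Fin.covBy_iff.2 (Nat.covBy_iff_add_one_eq.2 rfl)
  have hbinary : (y p' - y p) * (y p + y p') = y p' - y p := by
    rcases hy p with h | h <;> rcases hy p' with h' | h' <;> norm_num [h, h']
  have hweight : (1 / ((p' : ℕ) + 1 : ℝ)) = 1 / ((p : ℕ) + 2 : ℝ) := by
    simp only [p']
    push_cast
    ring
  simp only [AP, filter_ge_eq_Iic, filter_gt_eq_Iio, ← sub_div]
  rw [sum_mul_sum_Iic_comp_swap_sub hcov, hweight]
  linear_combination (1 / ((p : ℕ) + 1 : ℝ) - 1 / ((p : ℕ) + 2 : ℝ)) / Kt * hbinary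

/-- Equation (map-change): the change in average precision when the item at position
`p+1` (1-based) is moved up one position, swapping with the item at position `p`.
Here positions are 0-indexed by `Fin k`, so index `p` corresponds to 1-based
position `p + 1`. -/
theorem ap_swap_change (k : ℕ) (hk : 2 ≤ k) (y : Fin k → ℝ)
    (hy : ∀ p, y p = 0 ∨ y p = 1) (Kt : ℝ) (hKt : 0 < Kt)
    (p : Fin k) (hp : (p : ℕ) + 1 < k) :
    let AP : (Fin k → ℝ) → ℝ := fun z =>
      (∑ q : Fin k, z q * ((1 / ((q : ℕ) + 1 : ℝ)) *
        ∑ r ∈ Finset.univ.filter (fun r => r ≤ q), z r)) / Kt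
    let p' : Fin k := ⟨(p : ℕ) + 1, hp⟩
    let y' : Fin k → ℝ := y ∘ Equiv.swap p p'
    AP y' - AP y =
      (y p' - y p) * (1 + ∑ q ∈ Finset.univ.filter (fun q => q < p), y q) *
        (1 / ((p : ℕ) + 1 : ℝ) - 1 / ((p : ℕ) + 2 : ℝ)) / Kt :=
  ap_swap_change_general k y hy Kt p hp
end

section
/- Let k ≥ 2, let y : Fin k → ℝ be binary relevance values of a ranked list, let K̃ > 0 be a real constant, and define AP@k(y) = (∑_{p=1}^{k} y(p)·((1/p)∑_{q=1}^{p} y(q)))/K̃. Let a ∈ {0,1} (as a real number) and let y' be obtained from y by replacing the entry at position k with a. Then AP@k(y') − AP@k(y) = (a − y(k))·(1 + ∑_{q=1}^{k-1} y(q))·(1/k)/K̃. (Equation (map-change) in the boundary case p = k, with 1/(p+1) replaced by 0: the change in average precision when a new item replaces the item at the bottom position of the top-k list.) -/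
open Finset

/-!
Only the bottom term of the numerator of AP@k sees the bottom entry: every other term involves
positions strictly above it. With `S` the number of relevant items above the bottom, that term is
`x (x + S) / k` for the bottom relevance `x`, which equals `x (1 + S) / k` because `x ∈ {0, 1}`.
-/

/-- The numerator of average precision with position weights `w`; AP@k uses `w q = 1 / (q + 1)`. -/
def weightedPrefixSum {ι R : Type*} [Fintype ι] [LinearOrder ι] [CommRing R] (w z : ι → R) : R :=
  ∑ q, z q * (w q * ∑ r ∈ univ.filter (· ≤ q), z r)

section Top

variable {ι : Type*} [Fintype ι] [LinearOrder ι] {b : ι}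

theorem sum_eq_add_sum_filter_lt_of_isTop {M : Type*} [AddCommMonoid M] (hb : IsTop b)
    (z : ι → M) : ∑ q, z q = z b + ∑ q ∈ univ.filter (· < b), z q := by
  have herase : univ.filter (· < b) = univ.erase b := by
    ext q
    simpa using ⟨ne_of_lt, lt_of_le_of_ne (hb q)⟩
  rw [herase, add_sum_erase _ _ (mem_univ b)]

theorem weightedPrefixSum_eq_of_isTop {R : Type*} [CommRing R] (hb : IsTop b) (w z : ι → R) :
    weightedPrefixSum w z =
      ∑ q ∈ univ.filter (· < b), z q * (w q * ∑ r ∈ univ.filter (· ≤ q), z r)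
        + z b * (w b * (z b + ∑ q ∈ univ.filter (· < b), z q)) := by
  have hfull : univ.filter (· ≤ b) = univ := filter_true_of_mem fun q _ => hb q
  rw [weightedPrefixSum, sum_eq_add_sum_filter_lt_of_isTop hb, hfull,
    sum_eq_add_sum_filter_lt_of_isTop hb z, add_comm]

theorem weightedPrefixSum_update_sub_of_isTop {R : Type*} [CommRing R] [DecidableEq ι]
    (hb : IsTop b) (w z : ι → R) (a : R) :
    weightedPrefixSum w (Function.update z b a) - weightedPrefixSum w z =
      w b * (a * (a + ∑ q ∈ univ.filter (· < b), z q)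
        - z b * (z b + ∑ q ∈ univ.filter (· < b), z q)) := by
  have hupdate : ∀ q < b, Function.update z b a q = z q :=
    fun q hq => Function.update_of_ne hq.ne a z
  have hprefix : ∀ q < b, ∑ r ∈ univ.filter (· ≤ q), Function.update z b a r =
      ∑ r ∈ univ.filter (· ≤ q), z r :=
    fun q hq => sum_congr rfl fun r hr => hupdate r (lt_of_le_of_lt (mem_filter.mp hr).2 hq)
  have hbelow : ∑ q ∈ univ.filter (· < b), Function.update z b a q =
      ∑ q ∈ univ.filter (· < b), z q :=
    sum_congr rfl fun q hq => hupdate q (mem_filter.mp hq).2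
  rw [weightedPrefixSum_eq_of_isTop hb, weightedPrefixSum_eq_of_isTop hb, Function.update_self,
    hbelow,
    sum_congr rfl fun q hq => by rw [hupdate q (mem_filter.mp hq).2, hprefix q (mem_filter.mp hq).2]]
  ring

end Top

/-- Equation (map-change) in the boundary case `p = k` (with `1/(p+1)` replaced by 0):
the change in average precision when a new item of relevance `a` replaces the item at
the bottom position of the top-k list. Positions are 0-indexed by `Fin k`, so the
bottom (1-based position `k`) is index `k - 1`. -/
theorem ap_bottom_replace_change (k : ℕ) (hk : 2 ≤ k) (y : Fin k → ℝ)
    (hy : ∀ p, y p = 0 ∨ y p = 1) (Kt : ℝ)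
    (a : ℝ) (ha : a = 0 ∨ a = 1) :
    let AP : (Fin k → ℝ) → ℝ := fun z =>
      (∑ q : Fin k, z q * ((1 / ((q : ℕ) + 1 : ℝ)) *
        ∑ r ∈ Finset.univ.filter (fun r => r ≤ q), z r)) / Kt
    let bot : Fin k := ⟨k - 1, by omega⟩
    let y' : Fin k → ℝ := Function.update y bot a
    AP y' - AP y =
      (a - y bot) * (1 + ∑ q ∈ Finset.univ.filter (fun q => q < bot), y q) *
        (1 / (k : ℝ)) / Kt := by
  intro AP bot y'
  have hbot : IsTop bot := fun q => Fin.le_def.mpr (by simp only [bot]; omega)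
  have hweight : ((bot : ℕ) : ℝ) + 1 = k := by
    rw [← Nat.cast_add_one, Nat.sub_add_cancel (by omega)]
  have hidem : ∀ x : ℝ, x = 0 ∨ x = 1 → x * x = x := by rintro x (rfl | rfl) <;> norm_num
  change weightedPrefixSum (fun q : Fin k => 1 / ((q : ℕ) + 1 : ℝ)) y' / Kt
    - weightedPrefixSum (fun q : Fin k => 1 / ((q : ℕ) + 1 : ℝ)) y / Kt = _
  rw [← sub_div, weightedPrefixSum_update_sub_of_isTop hbot, hweight]
  linear_combination (1 / (k : ℝ) / Kt) * (hidem a ha - hidem (y bot) (hy bot))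
end
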